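/- arXiv:1610.07339 — 5 statements merged into one kernel-verified Lean document; each statement's English description precedes it below -/
import Mathlib

section
/- Consider a greedy algorithm that partitions types into K ≤ T clusters such that any two types in the same cluster are mutually compatible (α_{t,t'} ≤ 1 and α_{t',t} ≤ 1), never colocates tasks from different clusters, and fills machines up to load L_max = max{2L, L + p_max} where L = W/(m−T). Then if T < m, the algorithm uses at most m machines, and its maximum cost is at most (2Tm/(m−T))·OPT. -/
open Finset

/-- Cost of task `i` in allocation `P`. -/
noncomputable def mseCost {n m T : ℕ} (p : Fin n → ℝ) (ty : Fin n → Fin T)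
    (α : Fin T → Fin T → ℝ) (P : Fin n → Fin m) (i : Fin n) : ℝ :=
  ∑ j ∈ univ.filter (fun j => P j = P i), p j * α (ty j) (ty i)

/-- Maximum cost of allocation `P`. -/
noncomputable def mseMaxCost {n m T : ℕ} (p : Fin n → ℝ) (ty : Fin n → Fin T)
    (α : Fin T → Fin T → ℝ) (P : Fin n → Fin m) : ℝ :=
  ⨆ i, mseCost p ty α P i

/-- FillGreedy. If an allocation `S` (the output of the greedy
algorithm) only colocates tasks of mutually compatible types (`α ≤ 1` in both
directions) and loads each machine up to at most `L_max = max {2L, L + p_max}`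
with `L = W/(m - T)`, then (given `T < m`) its maximum cost is within a factor
`2·T·m/(m - T)` of the cost of any allocation, in particular of the optimum. -/
theorem fillGreedy_approx (n m T : ℕ) (hn : 0 < n) (hT : 0 < T) (hTm : T < m)
    (p : Fin n → ℝ) (ty : Fin n → Fin T) (α : Fin T → Fin T → ℝ)
    (hp : ∀ i, 0 < p i) (hdiag : ∀ t, α t t = 1) (hnn : ∀ t t', 0 ≤ α t t')
    (S : Fin n → Fin m)
    -- colocated tasks have mutually compatible types
    (hcompat : ∀ i j, S i = S j → α (ty i) (ty j) ≤ 1)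
    -- each machine is loaded up to at most L_max = max {2L, L + p_max}
    (hload : ∀ k : Fin m,
      (∑ j ∈ univ.filter (fun j => S j = k), p j) ≤
        max (2 * ((∑ i, p i) / ((m : ℝ) - (T : ℝ))))
            ((∑ i, p i) / ((m : ℝ) - (T : ℝ)) + ⨆ i, p i)) :
    ∀ Q : Fin n → Fin m,
      mseMaxCost p ty α S ≤ (2 * (T : ℝ) * (m : ℝ)) / ((m : ℝ) - (T : ℝ)) * mseMaxCost p ty α Q := by
  intro Q
  have hn' : Nonempty (Fin n) := ⟨⟨0, hn⟩⟩
  set W : ℝ := ∑ i, p i with hWdef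
  set D : ℝ := (m : ℝ) - (T : ℝ) with hDdef
  have hD0 : 0 < D := by
    have : (T : ℝ) < (m : ℝ) := by exact_mod_cast hTm
    simpa [hDdef] using sub_pos.mpr this
  set C : ℝ := mseMaxCost p ty α Q with hCdef
  have bddQ : BddAbove (Set.range (mseCost p ty α Q)) := (Set.finite_range _).bddAbove
  have bddp : BddAbove (Set.range p) := (Set.finite_range _).bddAbove
  -- every task's size is a lower bound for its cost under Q
  have hpC : ∀ i, p i ≤ C := by
    intro i
    have h1 : p i ≤ mseCost p ty α Q i := by
      unfold mseCost
      have hi : i ∈ univ.filter (fun j => Q j = Q i) := by simp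
      calc p i = p i * α (ty i) (ty i) := by rw [hdiag]; ring
        _ ≤ ∑ j ∈ univ.filter (fun j => Q j = Q i), p j * α (ty j) (ty i) :=
          Finset.single_le_sum (f := fun j => p j * α (ty j) (ty i))
            (fun j _ => mul_nonneg (hp j).le (hnn _ _)) hi
    exact h1.trans (le_ciSup bddQ i)
  have hC0 : 0 ≤ C := le_trans (hp ⟨0, hn⟩).le (hpC _)
  have hpmax : (⨆ i, p i) ≤ C := ciSup_le hpC
  -- W ≤ T * m * C
  have hmachine : ∀ k : Fin m, (∑ j ∈ univ.filter (fun j => Q j = k), p j) ≤ (T : ℝ) * C := by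
    intro k
    have hsplit : ∑ t : Fin T, ∑ i ∈ (univ.filter (fun j => Q j = k)).filter
        (fun i => ty i = t), p i = ∑ j ∈ univ.filter (fun j => Q j = k), p j :=
      Finset.sum_fiberwise _ ty p
    rw [← hsplit]
    have hinner : ∀ t : Fin T,
        (∑ i ∈ (univ.filter (fun j => Q j = k)).filter (fun i => ty i = t), p i) ≤ C := by
      intro t
      by_cases hne : ((univ.filter (fun j => Q j = k)).filter (fun i => ty i = t)).Nonempty
      · obtain ⟨i0, hi0⟩ := hne
        simp only [mem_filter, mem_univ, true_and] at hi0
        obtain ⟨hQ0, hty0⟩ := hi0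
        have h1 : (∑ i ∈ (univ.filter (fun j => Q j = k)).filter (fun i => ty i = t), p i)
            ≤ mseCost p ty α Q i0 := by
          unfold mseCost
          have heq : ∀ i ∈ (univ.filter (fun j => Q j = k)).filter (fun i => ty i = t),
              p i = p i * α (ty i) (ty i0) := by
            intro i hi
            simp only [mem_filter, mem_univ, true_and] at hi
            rw [hi.2, hty0, hdiag]; ring
          rw [Finset.sum_congr rfl heq]
          apply Finset.sum_le_sum_of_subset_of_nonneg
          · intro i hi
            simp only [mem_filter, mem_univ, true_and] at hi ⊢
            rw [hi.1, hQ0]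
          · intro i _ _
            exact mul_nonneg (hp i).le (hnn _ _)
        exact h1.trans (le_ciSup bddQ i0)
      · rw [Finset.not_nonempty_iff_eq_empty] at hne
        rw [hne]; simpa using hC0
    calc ∑ t : Fin T, ∑ i ∈ (univ.filter (fun j => Q j = k)).filter (fun i => ty i = t), p i
        ≤ ∑ _t : Fin T, C := Finset.sum_le_sum (fun t _ => hinner t)
      _ = (T : ℝ) * C := by simp [mul_comm]
  have hWle : W ≤ (T : ℝ) * (m : ℝ) * C := by
    have hsplit : ∑ k : Fin m, ∑ j ∈ univ.filter (fun j => Q j = k), p j = W :=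
      Finset.sum_fiberwise _ Q p
    calc W = ∑ k : Fin m, ∑ j ∈ univ.filter (fun j => Q j = k), p j := hsplit.symm
      _ ≤ ∑ _k : Fin m, (T : ℝ) * C := Finset.sum_le_sum (fun k _ => hmachine k)
      _ = (m : ℝ) * ((T : ℝ) * C) := by simp [mul_comm]
      _ = (T : ℝ) * (m : ℝ) * C := by ring
  -- maxCost S ≤ L_max
  have hSmax : mseMaxCost p ty α S ≤ max (2 * (W / D)) (W / D + ⨆ i, p i) := by
    apply ciSup_le
    intro i
    have h1 : mseCost p ty α S i ≤ ∑ j ∈ univ.filter (fun j => S j = S i), p j := by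
      unfold mseCost
      apply Finset.sum_le_sum
      intro j hj
      simp only [mem_filter, mem_univ, true_and] at hj
      calc p j * α (ty j) (ty i) ≤ p j * 1 :=
            mul_le_mul_of_nonneg_left (hcompat j i hj) (hp j).le
        _ = p j := mul_one _
    exact h1.trans (hload (S i))
  -- L_max ≤ 2TmC/D
  have hT1 : (1 : ℝ) ≤ (T : ℝ) := by exact_mod_cast hT
  have hm1 : (1 : ℝ) ≤ (m : ℝ) := by exact_mod_cast (hT.trans hTm)
  have hDTm : D ≤ (T : ℝ) * (m : ℝ) := by nlinarith
  have hfinal : max (2 * (W / D)) (W / D + ⨆ i, p i)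
      ≤ (2 * (T : ℝ) * (m : ℝ)) / D * C := by
    have hgoal : (2 * (T : ℝ) * (m : ℝ)) / D * C = (2 * (T : ℝ) * (m : ℝ) * C) / D := by
      ring
    rw [hgoal]
    apply max_le
    · have h2 : 2 * (W / D) = (2 * W) / D := by ring
      rw [h2]
      exact div_le_div_of_nonneg_right (by linarith) hD0.le
    · have heq : W / D + (⨆ i, p i) = (W + (⨆ i, p i) * D) / D := by
        field_simp
      rw [heq]
      apply div_le_div_of_nonneg_right (by nlinarith [mul_le_mul hpmax hDTm hD0.le hC0]) hD0.le
  exact hSmax.trans hfinal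
end

section
/- With T = 2 types, symmetric coefficient α ≤ 1, and a (1+ε)-approximate algorithm A for makespan minimization on identical machines, the algorithm SchedJuxtapose(A) — which schedules each type separately on all m machines using A and then superimposes the two schedules machine-by-machine — produces an allocation whose maximum cost is at most (1+ε)(1+α)·OPT. -/
open Finset

/-- Load of tasks of type `b` on machine `k` in allocation `P` (two types, as `Bool`). -/
noncomputable def tload {n m : ℕ} (p : Fin n → ℝ) (ty : Fin n → Bool)
    (P : Fin n → Fin m) (b : Bool) (k : Fin m) : ℝ :=
  ∑ i ∈ univ.filter (fun i => P i = k ∧ ty i = b), p i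

/-- Maximum cost of a two-type MSE allocation with symmetric cross coefficient `α`
(and `α_{t,t} = 1`): the cost of task `i` is its own-type load plus `α` times
the other type's load on its machine. -/
noncomputable def mse2 {n m : ℕ} (p : Fin n → ℝ) (ty : Fin n → Bool) (α : ℝ)
    (P : Fin n → Fin m) : ℝ :=
  ⨆ i, (tload p ty P (ty i) (P i) + α * tload p ty P (!(ty i)) (P i))

/-- Makespan of the tasks of type `b` alone under allocation `P`. -/
noncomputable def tmakespan {n m : ℕ} (p : Fin n → ℝ) (ty : Fin n → Bool)
    (P : Fin n → Fin m) (b : Bool) : ℝ :=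
  ⨆ k, tload p ty P b k

lemma tload_nonneg {n m : ℕ} (p : Fin n → ℝ) (ty : Fin n → Bool)
    (hp : ∀ i, 0 < p i) (P : Fin n → Fin m) (b : Bool) (k : Fin m) :
    0 ≤ tload p ty P b k :=
  Finset.sum_nonneg fun i _ => (hp i).le

lemma tload_le_tmakespan {n m : ℕ} (p : Fin n → ℝ) (ty : Fin n → Bool)
    (P : Fin n → Fin m) (b : Bool) (k : Fin m) :
    tload p ty P b k ≤ tmakespan p ty P b :=
  le_ciSup (Finite.bddAbove_range _) k

lemma mse2_nonneg {n m : ℕ} (hn : 0 < n) (p : Fin n → ℝ) (ty : Fin n → Bool)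
    (hp : ∀ i, 0 < p i) (hα0 : 0 ≤ α) (P : Fin n → Fin m) :
    0 ≤ mse2 p ty α P := by
  obtain ⟨i⟩ := Fin.pos_iff_nonempty.mp hn
  unfold mse2
  have h : (0:ℝ) ≤ tload p ty P (ty i) (P i) + α * tload p ty P (!(ty i)) (P i) :=
    add_nonneg (tload_nonneg p ty hp P _ _)
      (mul_nonneg hα0 (tload_nonneg p ty hp P _ _))
  exact h.trans (le_ciSup (f := fun j => tload p ty P (ty j) (P j) + α * tload p ty P (!(ty j)) (P j)) (Finite.bddAbove_range _) i)

lemma tmakespan_le_mse2 {n m : ℕ} (hn : 0 < n) (p : Fin n → ℝ) (ty : Fin n → Bool)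
    (hp : ∀ i, 0 < p i) (hα0 : 0 ≤ α) (P : Fin n → Fin m) (b : Bool) :
    tmakespan p ty P b ≤ mse2 p ty α P := by
  have : Nonempty (Fin m) := by
    rcases isEmpty_or_nonempty (Fin m) with h | h
    · exact (hn.ne' (Nat.eq_zero_of_le_zero (Nat.le_of_not_lt fun _ => (h.false (P ⟨0, hn⟩))))).elim
    · exact h
  unfold tmakespan mse2
  apply ciSup_le
  intro k
  by_cases h : ∃ i, P i = k ∧ ty i = b
  · obtain ⟨i, hik, hib⟩ := h
    have h1 : tload p ty P b k ≤
        tload p ty P (ty i) (P i) + α * tload p ty P (!(ty i)) (P i) := by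
      rw [hik, hib]
      exact le_add_of_nonneg_right (mul_nonneg hα0 (tload_nonneg p ty hp P _ _))
    exact h1.trans (le_ciSup (f := fun j => tload p ty P (ty j) (P j) + α * tload p ty P (!(ty j)) (P j)) (Finite.bddAbove_range _) i)
  · have : tload p ty P b k = 0 := by
      unfold tload
      rw [Finset.sum_eq_zero]
      intro i hi
      simp only [Finset.mem_filter] at hi
      exact absurd ⟨hi.2.1, hi.2.2⟩ (h ⟨i, ·⟩)
    rw [this]
    have := mse2_nonneg hn p ty hp hα0 P
    unfold mse2 at this
    exact this

/-- SchedJuxtapose with a (1+ε)-approximate makespan algorithm is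
(1+ε)(1+α)-approximate for two-type MSE with α ≤ 1. The allocation `σ` schedules
each type with makespan at most (1+ε) times the optimal per-type makespan. -/
theorem schedJuxtapose_approx (n m : ℕ) (hn : 0 < n) (hm : 0 < m)
    (ε α OPT C1 C2 : ℝ) (hε : 0 ≤ ε) (hα0 : 0 ≤ α) (hα1 : α ≤ 1)
    (p : Fin n → ℝ) (ty : Fin n → Bool) (hp : ∀ i, 0 < p i)
    (σ : Fin n → Fin m)
    (hC1 : IsLeast (Set.range (fun Q : Fin n → Fin m => tmakespan p ty Q false)) C1)
    (hC2 : IsLeast (Set.range (fun Q : Fin n → Fin m => tmakespan p ty Q true)) C2)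
    (hσ1 : tmakespan p ty σ false ≤ (1 + ε) * C1)
    (hσ2 : tmakespan p ty σ true ≤ (1 + ε) * C2)
    (hOPT : IsLeast (Set.range (mse2 p ty α (m := m))) OPT) :
    mse2 p ty α σ ≤ (1 + ε) * (1 + α) * OPT := by
  obtain ⟨⟨P₀, hP₀⟩, hOPTlb⟩ := hOPT
  have hC1opt : C1 ≤ OPT := by
    calc C1 ≤ tmakespan p ty P₀ false := hC1.2 ⟨P₀, rfl⟩
    _ ≤ mse2 p ty α P₀ := tmakespan_le_mse2 hn p ty hp hα0 P₀ false
    _ = OPT := hP₀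
  have hC2opt : C2 ≤ OPT := by
    calc C2 ≤ tmakespan p ty P₀ true := hC2.2 ⟨P₀, rfl⟩
    _ ≤ mse2 p ty α P₀ := tmakespan_le_mse2 hn p ty hp hα0 P₀ true
    _ = OPT := hP₀
  have h1ε : (0:ℝ) ≤ 1 + ε := by linarith
  have : Nonempty (Fin n) := Fin.pos_iff_nonempty.mp hn
  unfold mse2
  apply ciSup_le
  intro i
  have key : ∀ b : Bool, tload p ty σ b (σ i) + α * tload p ty σ (!b) (σ i)
      ≤ (1 + ε) * (1 + α) * OPT := by
    intro b
    have hb : tload p ty σ b (σ i) ≤ (1 + ε) * OPT := by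
      cases b
      · exact (tload_le_tmakespan p ty σ false (σ i)).trans
          (hσ1.trans (by nlinarith))
      · exact (tload_le_tmakespan p ty σ true (σ i)).trans
          (hσ2.trans (by nlinarith))
    have hnb : tload p ty σ (!b) (σ i) ≤ (1 + ε) * OPT := by
      cases b
      · exact (tload_le_tmakespan p ty σ true (σ i)).trans
          (hσ2.trans (by nlinarith))
      · exact (tload_le_tmakespan p ty σ false (σ i)).trans
          (hσ1.trans (by nlinarith))
    nlinarith
  exact key (ty i)
end

section
/- Consider divisible-load MSE with two types, total loads W_1 and W_2, m machines, and symmetric coefficient α < 1. The allocation placing load W_1/m of type 1 and W_2/m of type 2 on every machine minimizes the maximum cost, achieving cost max{W_1/m + α·W_2/m, W_2/m + α·W_1/m}. -/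
open Finset

/-- Maximum cost of a divisible-load two-type allocation `(x, y)` with symmetric
cross coefficient `α`: on machine `k`, a type-1 cost `x k + α·y k` counts iff
`x k > 0`, and a type-2 cost `y k + α·x k` counts iff `y k > 0`. -/
noncomputable def dcost {m : ℕ} (α : ℝ) (x y : Fin m → ℝ) : ℝ :=
  ⨆ k, max (if 0 < x k then x k + α * y k else 0)
           (if 0 < y k then y k + α * x k else 0)

/-- divisible-load MSE with two types and α < 1: the uniform
allocation (load `Wᵢ/m` of type `i` on every machine) minimizes the maximum
cost, achieving cost `max {W₁/m + α·W₂/m, W₂/m + α·W₁/m}`. -/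
theorem divisible_compatible_uniform_optimal (m : ℕ) (hm : 0 < m)
    (α W1 W2 : ℝ) (hα0 : 0 ≤ α) (hα1 : α < 1) (hW1 : 0 < W1) (hW2 : 0 < W2) :
    dcost α (fun _ : Fin m => W1 / m) (fun _ : Fin m => W2 / m) =
      max (W1 / m + α * (W2 / m)) (W2 / m + α * (W1 / m)) ∧
    ∀ x y : Fin m → ℝ, (∀ k, 0 ≤ x k) → (∀ k, 0 ≤ y k) →
      (∑ k, x k) = W1 → (∑ k, y k) = W2 →
      max (W1 / m + α * (W2 / m)) (W2 / m + α * (W1 / m)) ≤ dcost α x y := by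
  have hmR : (0:ℝ) < m := by exact_mod_cast hm
  have hne : Nonempty (Fin m) := ⟨⟨0, hm⟩⟩
  constructor
  · unfold dcost
    have h1 : 0 < W1 / m := div_pos hW1 hmR
    have h2 : 0 < W2 / m := div_pos hW2 hmR
    simp only [if_pos h1, if_pos h2]
    exact ciSup_const
  · intro x y hx hy hsx hsy
    set f : Fin m → ℝ := fun k => max (if 0 < x k then x k + α * y k else 0)
        (if 0 < y k then y k + α * x k else 0) with hf
    have hbdd : BddAbove (Set.range f) := Set.Finite.bddAbove (Set.finite_range f)
    have hle : ∀ k, f k ≤ dcost α x y := fun k => le_ciSup hbdd k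
    have hD0 : 0 ≤ dcost α x y := by
      refine le_trans ?_ (hle ⟨0, hm⟩)
      have h0 : (0:ℝ) ≤ if 0 < x ⟨0, hm⟩ then x ⟨0, hm⟩ + α * y ⟨0, hm⟩ else 0 := by
        split_ifs with h
        · have := hy ⟨0, hm⟩; nlinarith
        · exact le_refl 0
      simp only [hf]
      exact le_trans h0 (le_max_left _ _)
    have hxk : ∀ k, x k + α * y k ≤ dcost α x y := by
      intro k
      rcases lt_or_eq_of_le (hx k) with h | h
      · refine le_trans ?_ (hle k)
        simp only [hf, if_pos h]
        exact le_max_left _ _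
      · rcases lt_or_eq_of_le (hy k) with h2 | h2
        · have : x k + α * y k ≤ y k + α * x k := by nlinarith
          refine le_trans this (le_trans ?_ (hle k))
          simp only [hf, if_pos h2]
          exact le_max_right _ _
        · rw [← h, ← h2]; simpa using hD0
    have hyk : ∀ k, y k + α * x k ≤ dcost α x y := by
      intro k
      rcases lt_or_eq_of_le (hy k) with h | h
      · refine le_trans ?_ (hle k)
        simp only [hf, if_pos h]
        exact le_max_right _ _
      · rcases lt_or_eq_of_le (hx k) with h2 | h2
        · have : y k + α * x k ≤ x k + α * y k := by nlinarith
          refine le_trans this (le_trans ?_ (hle k))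
          simp only [hf, if_pos h2]
          exact le_max_left _ _
        · rw [← h, ← h2]; simpa using hD0
    have hsum1 : W1 + α * W2 ≤ m * dcost α x y := by
      have := Finset.sum_le_sum (fun k _ => hxk k) (s := Finset.univ)
      rw [Finset.sum_add_distrib, ← Finset.mul_sum, hsx, hsy] at this
      simpa [Finset.sum_const, Finset.card_univ, nsmul_eq_mul] using this
    have hsum2 : W2 + α * W1 ≤ m * dcost α x y := by
      have := Finset.sum_le_sum (fun k _ => hyk k) (s := Finset.univ)
      rw [Finset.sum_add_distrib, ← Finset.mul_sum, hsx, hsy] at this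
      simpa [Finset.sum_const, Finset.card_univ, nsmul_eq_mul] using this
    apply max_le
    · have e : W1 / m + α * (W2 / m) = (W1 + α * W2) / m := by ring
      rw [e, div_le_iff₀ hmR]
      nlinarith [hsum1]
    · have e : W2 / m + α * (W1 / m) = (W2 + α * W1) / m := by ring
      rw [e, div_le_iff₀ hmR]
      nlinarith [hsum2]
end

section
/- Consider divisible-load MSE with two types, symmetric coefficient α > 1, and m machines. In every optimal allocation, at most one machine carries positive load of both types. -/
open Finset

/-- Choice of a small positive shaving factor. -/
lemma pick_delta (α M V S : ℝ) (hα : 1 < α) (hS : 0 ≤ S) (hVM : V < M) :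
    ∃ δ : ℝ, 0 < δ ∧ δ < 1 ∧ α * (δ * S) ≤ (M - V) / 2 ∧ δ * S ≤ (M - V) / 2 := by
  have hα0 : (0:ℝ) < α := by linarith
  have hden : 0 < 2 * α * (S + 1) := by nlinarith
  refine ⟨min ((M - V) / (2 * α * (S + 1))) (1 / 2),
    lt_min (div_pos (by linarith) hden) (by norm_num),
    lt_of_le_of_lt (min_le_right _ _) (by norm_num), ?_, ?_⟩
  · have h := (le_div_iff₀ hden).mp (min_le_left ((M - V) / (2 * α * (S + 1))) (1/2))
    have hmin0 : 0 ≤ min ((M - V) / (2 * α * (S + 1))) (1 / 2) :=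
      (lt_min (div_pos (by linarith) hden) (by norm_num)).le
    nlinarith [mul_nonneg hmin0 hS]
  · have h := (le_div_iff₀ hden).mp (min_le_left ((M - V) / (2 * α * (S + 1))) (1/2))
    have hmin0 : 0 ≤ min ((M - V) / (2 * α * (S + 1))) (1 / 2) :=
      (lt_min (div_pos (by linarith) hden) (by norm_num)).le
    nlinarith [mul_nonneg hmin0 hS]

/-- Core splitting lemma in the unbalanced case `α*Q < P`. -/
lemma split2_core (α M P Q E1 E2 : ℝ) (hα : 1 < α) (hP : 0 < P) (hQ : 0 < Q)
    (hE1 : 0 ≤ E1) (hE2 : 0 ≤ E2)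
    (h1 : α * P + Q ≤ 2 * M) (h2 : P + α * Q ≤ 2 * M) (hc : α * Q < P) :
    ∃ δ A1 A2 B1 B2 : ℝ, 0 < δ ∧ δ < 1 ∧ 0 ≤ A1 ∧ 0 ≤ A2 ∧ 0 ≤ B1 ∧ 0 ≤ B2 ∧
      A1 + B1 = P + δ * E1 ∧ A2 + B2 = Q + δ * E2 ∧
      max (if 0 < A1 then A1 + α * A2 else 0) (if 0 < A2 then A2 + α * A1 else 0) < M ∧
      max (if 0 < B1 then B1 + α * B2 else 0) (if 0 < B2 then B2 + α * B1 else 0) < M := by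
  have hα0 : (0:ℝ) < α := by linarith
  have hM0 : 0 < M := by nlinarith [mul_pos hα0 hP]
  have hPQ : Q < P := by nlinarith [mul_pos (sub_pos.mpr hα) hQ]
  by_cases hc2 : P ≤ (α + 2) * Q
  · -- moderate imbalance: value V = (P+αQ)/2
    have hVM : (P + α * Q) / 2 < M := by
      linarith [mul_pos (sub_pos.mpr hα) (sub_pos.mpr hPQ)]
    have hV0 : 0 < (P + α * Q) / 2 := by nlinarith [mul_pos hα0 hQ]
    obtain ⟨δ, hδ0, hδ1, hb2, hb1⟩ :=
      pick_delta α M ((P + α * Q) / 2) (E1 + E2) hα (by linarith) hVM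
    have hd1 : δ * E1 ≤ (M - (P + α * Q) / 2) / 2 :=
      le_trans (by linarith [mul_nonneg hδ0.le hE2]) hb1
    have hd2 : α * (δ * E2) ≤ (M - (P + α * Q) / 2) / 2 :=
      le_trans (by linarith [mul_nonneg (mul_nonneg hα0.le hδ0.le) hE1]) hb2
    have hd2' : δ * E2 ≤ (M - (P + α * Q) / 2) / 2 :=
      le_trans (by linarith [mul_nonneg hδ0.le hE1]) hb1
    have hA1pos : 0 < (P + α * Q) / 2 + δ * E1 := by
      linarith [mul_nonneg hδ0.le hE1, hV0]
    have hB1pos : 0 < (P - α * Q) / 2 := by linarith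
    have hB2pos : 0 < Q + δ * E2 := by linarith [mul_nonneg hδ0.le hE2]
    refine ⟨δ, (P + α * Q) / 2 + δ * E1, 0, (P - α * Q) / 2, Q + δ * E2, hδ0, hδ1,
      hA1pos.le, le_refl 0, hB1pos.le, hB2pos.le, by ring, by ring, ?_, ?_⟩
    · rw [if_pos hA1pos, if_neg (lt_irrefl 0)]
      exact max_lt (by linarith [hd1, hVM]) hM0
    · rw [if_pos hB1pos, if_pos hB2pos]
      have hsw : Q + α * ((P - α * Q) / 2) ≤ (P + α * Q) / 2 := by
        linarith [mul_nonneg (sub_nonneg.mpr hα.le)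
          (sub_nonneg.mpr hc2)]
      exact max_lt (by linarith [hd2, hVM]) (by linarith [hsw, hd2', hVM])
  · -- extreme imbalance: value W = (Q+αP)/(1+α)
    push_neg at hc2
    have h1α : (0:ℝ) < 1 + α := by linarith
    have hαPQ : 0 < α * P + Q := by nlinarith [mul_pos hα0 hP]
    have hnum : Q + α * P < M * (1 + α) := by
      linarith [mul_le_mul_of_nonneg_left h1 hα0.le,
        mul_pos (sub_pos.mpr hα) hαPQ]
    have hWM : (Q + α * P) / (1 + α) < M := (div_lt_iff₀ h1α).mpr hnum
    have hW0 : 0 < (Q + α * P) / (1 + α) := div_pos (by linarith) h1α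
    obtain ⟨δ, hδ0, hδ1, hb2, hb1⟩ :=
      pick_delta α M ((Q + α * P) / (1 + α)) (E1 + E2) hα (by linarith) hWM
    have hd1 : δ * E1 ≤ (M - (Q + α * P) / (1 + α)) / 2 :=
      le_trans (by linarith [mul_nonneg hδ0.le hE2]) hb1
    have hd2 : α * (δ * E2) ≤ (M - (Q + α * P) / (1 + α)) / 2 :=
      le_trans (by linarith [mul_nonneg (mul_nonneg hα0.le hδ0.le) hE1]) hb2
    have hd2' : δ * E2 ≤ (M - (Q + α * P) / (1 + α)) / 2 :=
      le_trans (by linarith [mul_nonneg hδ0.le hE1]) hb1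
    have hA1pos : 0 < (Q + α * P) / (1 + α) + δ * E1 := by
      linarith [mul_nonneg hδ0.le hE1, hW0]
    have hB1pos : 0 < (P - Q) / (1 + α) := div_pos (by linarith) h1α
    have hB2pos : 0 < Q + δ * E2 := by linarith [mul_nonneg hδ0.le hE2]
    have hid : (Q + α * P) / (1 + α) + (P - Q) / (1 + α) = P := by
      field_simp
      ring
    have hcomp1 : (P - Q) / (1 + α) + α * Q ≤ (Q + α * P) / (1 + α) := by
      have he : (Q + α * P) / (1 + α) - ((P - Q) / (1 + α) + α * Q)
          = ((α - 1) * (P - (α + 2) * Q)) / (1 + α) := by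
        field_simp
        ring
      have hnn : 0 ≤ ((α - 1) * (P - (α + 2) * Q)) / (1 + α) :=
        div_nonneg (mul_nonneg (by linarith) (by linarith)) h1α.le
      linarith [he, hnn]
    have hcomp2 : Q + α * ((P - Q) / (1 + α)) = (Q + α * P) / (1 + α) := by
      field_simp
      ring
    refine ⟨δ, (Q + α * P) / (1 + α) + δ * E1, 0, (P - Q) / (1 + α), Q + δ * E2,
      hδ0, hδ1, hA1pos.le, le_refl 0, hB1pos.le, hB2pos.le, by linarith, by ring, ?_, ?_⟩
    · rw [if_pos hA1pos, if_neg (lt_irrefl 0)]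
      exact max_lt (by linarith [hd1, hWM]) hM0
    · rw [if_pos hB1pos, if_pos hB2pos]
      exact max_lt (by linarith [hcomp1, hd2, hWM])
        (by linarith [hcomp2, hd2', hWM])

/-- Full splitting lemma. -/
lemma split2 (α M P Q E1 E2 : ℝ) (hα : 1 < α) (hP : 0 < P) (hQ : 0 < Q)
    (hE1 : 0 ≤ E1) (hE2 : 0 ≤ E2)
    (h1 : α * P + Q ≤ 2 * M) (h2 : P + α * Q ≤ 2 * M) :
    ∃ δ A1 A2 B1 B2 : ℝ, 0 < δ ∧ δ < 1 ∧ 0 ≤ A1 ∧ 0 ≤ A2 ∧ 0 ≤ B1 ∧ 0 ≤ B2 ∧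
      A1 + B1 = P + δ * E1 ∧ A2 + B2 = Q + δ * E2 ∧
      max (if 0 < A1 then A1 + α * A2 else 0) (if 0 < A2 then A2 + α * A1 else 0) < M ∧
      max (if 0 < B1 then B1 + α * B2 else 0) (if 0 < B2 then B2 + α * B1 else 0) < M := by
  have hα0 : (0:ℝ) < α := by linarith
  have hM0 : 0 < M := by nlinarith [mul_pos hα0 hP]
  by_cases hc : α * Q < P
  · exact split2_core α M P Q E1 E2 hα hP hQ hE1 hE2 h1 h2 hc
  by_cases hc' : α * P < Q
  · obtain ⟨δ, A1, A2, B1, B2, hδ0, hδ1, hA1, hA2, hB1, hB2, hs1, hs2, hcA, hcB⟩ :=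
      split2_core α M Q P E2 E1 hα hQ hP hE2 hE1 (by linarith) (by linarith) hc'
    exact ⟨δ, A2, A1, B2, B1, hδ0, hδ1, hA2, hA1, hB2, hB1, hs2, hs1,
      (max_comm _ _).trans_lt hcA, (max_comm _ _).trans_lt hcB⟩
  · -- balanced: full separation
    push_neg at hc hc'
    have hPM : P < M := by
      nlinarith [mul_le_mul_of_nonneg_left h1 hα0.le,
        mul_pos hP (mul_pos (sub_pos.mpr hα) (sub_pos.mpr hα))]
    have hQM : Q < M := by
      nlinarith [mul_le_mul_of_nonneg_left h2 hα0.le,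
        mul_pos hQ (mul_pos (sub_pos.mpr hα) (sub_pos.mpr hα))]
    have hVM : max P Q < M := max_lt hPM hQM
    obtain ⟨δ, hδ0, hδ1, hb2, hb1⟩ :=
      pick_delta α M (max P Q) (E1 + E2) hα (by linarith) hVM
    have hPV : P ≤ max P Q := le_max_left _ _
    have hQV : Q ≤ max P Q := le_max_right _ _
    have hd1 : δ * E1 ≤ (M - max P Q) / 2 :=
      le_trans (by linarith [mul_nonneg hδ0.le hE2]) hb1
    have hd2 : δ * E2 ≤ (M - max P Q) / 2 :=
      le_trans (by linarith [mul_nonneg hδ0.le hE1]) hb1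
    have hA1pos : 0 < P + δ * E1 := by linarith [mul_nonneg hδ0.le hE1]
    have hB2pos : 0 < Q + δ * E2 := by linarith [mul_nonneg hδ0.le hE2]
    refine ⟨δ, P + δ * E1, 0, 0, Q + δ * E2, hδ0, hδ1,
      hA1pos.le, le_refl 0, le_refl 0, hB2pos.le, by ring, by ring, ?_, ?_⟩
    · rw [if_pos hA1pos, if_neg (lt_irrefl 0)]
      exact max_lt (by linarith [hd1, hPV, hVM]) hM0
    · rw [if_neg (lt_irrefl 0), if_pos hB2pos]
      exact max_lt hM0 (by linarith [hd2, hQV, hVM])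

/-- divisible-load MSE with two types and α > 1: in every optimal
allocation, at most one machine carries positive load of both types. -/
theorem divisible_incompatible_one_shared (m : ℕ) (hm : 0 < m)
    (α W1 W2 : ℝ) (hα : 1 < α) (hW1 : 0 < W1) (hW2 : 0 < W2)
    (x y : Fin m → ℝ) (hx : ∀ k, 0 ≤ x k) (hy : ∀ k, 0 ≤ y k)
    (hsx : (∑ k, x k) = W1) (hsy : (∑ k, y k) = W2)
    (hopt : ∀ x' y' : Fin m → ℝ, (∀ k, 0 ≤ x' k) → (∀ k, 0 ≤ y' k) →
      (∑ k, x' k) = W1 → (∑ k, y' k) = W2 → dcost α x y ≤ dcost α x' y') :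
    ∀ k l : Fin m, (0 < x k ∧ 0 < y k) → (0 < x l ∧ 0 < y l) → k = l := by
  intro k l ⟨hxk, hyk⟩ ⟨hxl, hyl⟩
  by_contra hkl
  have hlk : l ≠ k := fun h => hkl h.symm
  have hα0 : (0:ℝ) < α := by linarith
  set M := dcost α x y with hM
  set F : Fin m → ℝ := fun j => max (if 0 < x j then x j + α * y j else 0)
      (if 0 < y j then y j + α * x j else 0) with hF
  have hFM : ∀ j, F j ≤ M := fun j =>
    le_ciSup (Set.Finite.bddAbove (Set.finite_range F)) j
  have hk1 : x k + α * y k ≤ M := by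
    have := hFM k
    simp only [hF, if_pos hxk, if_pos hyk] at this
    exact le_trans (le_max_left _ _) this
  have hk2 : y k + α * x k ≤ M := by
    have := hFM k
    simp only [hF, if_pos hxk, if_pos hyk] at this
    exact le_trans (le_max_right _ _) this
  have hl1 : x l + α * y l ≤ M := by
    have := hFM l
    simp only [hF, if_pos hxl, if_pos hyl] at this
    exact le_trans (le_max_left _ _) this
  have hl2 : y l + α * x l ≤ M := by
    have := hFM l
    simp only [hF, if_pos hxl, if_pos hyl] at this
    exact le_trans (le_max_right _ _) this
  have hM0 : 0 < M := lt_of_lt_of_le (add_pos hxk (mul_pos hα0 hyk)) hk1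
  -- the remaining machines
  set s : Finset (Fin m) := (Finset.univ.erase k).erase l with hs
  have hlmem : l ∈ Finset.univ.erase k := Finset.mem_erase.mpr ⟨hlk, Finset.mem_univ l⟩
  have hsplit : ∀ g : Fin m → ℝ, ∑ j, g j = g k + (g l + ∑ j ∈ s, g j) := by
    intro g
    have h1 := Finset.add_sum_erase Finset.univ g (Finset.mem_univ k)
    have h2 := Finset.add_sum_erase (Finset.univ.erase k) g hlmem
    rw [hs]
    linarith
  have hsx2 : ∑ j ∈ s, x j = W1 - (x k + x l) := by
    have := hsplit x
    rw [hsx] at this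
    linarith
  have hsy2 : ∑ j ∈ s, y j = W2 - (y k + y l) := by
    have := hsplit y
    rw [hsy] at this
    linarith
  have hE1nn : 0 ≤ W1 - (x k + x l) := by
    rw [← hsx2]
    exact Finset.sum_nonneg fun j _ => hx j
  have hE2nn : 0 ≤ W2 - (y k + y l) := by
    rw [← hsy2]
    exact Finset.sum_nonneg fun j _ => hy j
  obtain ⟨δ, A1, A2, B1, B2, hδ0, hδ1, hA1, hA2, hB1, hB2, hs1, hs2, hcA, hcB⟩ :=
    split2 α M (x k + x l) (y k + y l) (W1 - (x k + x l)) (W2 - (y k + y l))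
      hα (by linarith) (by linarith) hE1nn hE2nn (by linarith) (by linarith)
  have h1δ : 0 < 1 - δ := by linarith
  set x' : Fin m → ℝ := fun j => if j = k then A1 else if j = l then B1 else (1 - δ) * x j
    with hx'
  set y' : Fin m → ℝ := fun j => if j = k then A2 else if j = l then B2 else (1 - δ) * y j
    with hy'
  have ex'k : x' k = A1 := by simp [hx']
  have ex'l : x' l = B1 := by simp [hx', hlk]
  have ey'k : y' k = A2 := by simp [hy']
  have ey'l : y' l = B2 := by simp [hy', hlk]
  have ex'j : ∀ j ∈ s, x' j = (1 - δ) * x j := by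
    intro j hj
    have hj1 : j ≠ l := (Finset.mem_erase.mp hj).1
    have hj2 : j ≠ k := (Finset.mem_erase.mp (Finset.mem_erase.mp hj).2).1
    simp [hx', hj1, hj2]
  have ey'j : ∀ j ∈ s, y' j = (1 - δ) * y j := by
    intro j hj
    have hj1 : j ≠ l := (Finset.mem_erase.mp hj).1
    have hj2 : j ≠ k := (Finset.mem_erase.mp (Finset.mem_erase.mp hj).2).1
    simp [hy', hj1, hj2]
  have hx'nn : ∀ j, 0 ≤ x' j := by
    intro j
    rw [hx']
    dsimp only
    split_ifs
    · exact hA1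
    · exact hB1
    · exact mul_nonneg h1δ.le (hx j)
  have hy'nn : ∀ j, 0 ≤ y' j := by
    intro j
    rw [hy']
    dsimp only
    split_ifs
    · exact hA2
    · exact hB2
    · exact mul_nonneg h1δ.le (hy j)
  have hsx' : ∑ j, x' j = W1 := by
    rw [hsplit x', ex'k, ex'l]
    have : ∑ j ∈ s, x' j = (1 - δ) * (W1 - (x k + x l)) := by
      rw [← hsx2, Finset.mul_sum]
      exact Finset.sum_congr rfl fun j hj => ex'j j hj
    rw [this]
    linarith [hs1]
  have hsy' : ∑ j, y' j = W2 := by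
    rw [hsplit y', ey'k, ey'l]
    have : ∑ j ∈ s, y' j = (1 - δ) * (W2 - (y k + y l)) := by
      rw [← hsy2, Finset.mul_sum]
      exact Finset.sum_congr rfl fun j hj => ey'j j hj
    rw [this]
    linarith [hs2]
  -- the new allocation has strictly smaller cost
  set CA := max (if 0 < A1 then A1 + α * A2 else 0) (if 0 < A2 then A2 + α * A1 else 0)
    with hCA
  set CB := max (if 0 < B1 then B1 + α * B2 else 0) (if 0 < B2 then B2 + α * B1 else 0)
    with hCB
  haveI : Nonempty (Fin m) := ⟨k⟩
  have hnew : dcost α x' y' ≤ max (max CA CB) ((1 - δ) * M) := by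
    refine ciSup_le fun j => ?_
    by_cases hjk : j = k
    · subst hjk
      rw [ex'k, ey'k]
      exact le_trans (le_max_left CA CB) (le_max_left _ _)
    by_cases hjl : j = l
    · subst hjl
      rw [ex'l, ey'l]
      exact le_trans (le_max_right CA CB) (le_max_left _ _)
    have hjs : j ∈ s := by
      rw [hs]
      exact Finset.mem_erase.mpr ⟨hjl, Finset.mem_erase.mpr ⟨hjk, Finset.mem_univ j⟩⟩
    rw [ex'j j hjs, ey'j j hjs]
    refine le_trans (max_le ?_ ?_) (le_max_right (max CA CB) ((1 - δ) * M))
    · split_ifs with h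
      · have hxj : 0 < x j := by
          by_contra h'
          push_neg at h'
          linarith [mul_nonpos_of_nonneg_of_nonpos h1δ.le h']
        have hold : x j + α * y j ≤ M := by
          have := hFM j
          simp only [hF, if_pos hxj] at this
          exact le_trans (le_max_left _ _) this
        linarith [mul_le_mul_of_nonneg_left hold h1δ.le]
      · exact mul_nonneg h1δ.le hM0.le
    · split_ifs with h
      · have hyj : 0 < y j := by
          by_contra h'
          push_neg at h'
          linarith [mul_nonpos_of_nonneg_of_nonpos h1δ.le h']
        have hold : y j + α * x j ≤ M := by
          have := hFM j
          simp only [hF, if_pos hyj] at this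
          exact le_trans (le_max_right _ _) this
        linarith [mul_le_mul_of_nonneg_left hold h1δ.le]
      · exact mul_nonneg h1δ.le hM0.le
  have hlt : max (max CA CB) ((1 - δ) * M) < M :=
    max_lt (max_lt hcA hcB) (by nlinarith)
  have := hopt x' y' hx'nn hy'nn hsx' hsy'
  linarith
end

section
/- Given a graph G = (V,E) and r > 0, define an MSE instance with |V| unit tasks, each of its own type, α_{i,i}=1, α_{i,j}=0 if {i,j} ∈ E and α_{i,j}=r otherwise, on k machines. Then there exists an allocation of maximum cost 1 on k machines if and only if V can be partitioned into k sets each inducing a complete subgraph of G. -/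
open Finset

/-- reduction from Partition into Cliques. Given a graph `G` on
`nV` vertices and `r > 0`, with unit tasks (one per vertex, each its own type)
and coefficients `α i i = 1`, `α i j = 0` if `{i,j} ∈ E`, `α i j = r` otherwise:
there is an allocation on `k` machines of maximum cost 1 iff the vertices can be
partitioned into `k` sets each inducing a complete subgraph of `G`. -/
theorem pic_reduction (nV k : ℕ) (hn : 0 < nV) (hk : 0 < k)
    (r : ℝ) (hr : 0 < r)
    (G : SimpleGraph (Fin nV)) [DecidableRel G.Adj]
    (α : Fin nV → Fin nV → ℝ)
    (hα : ∀ i j, α i j = if i = j then 1 else if G.Adj i j then 0 else r) :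
    (∃ P : Fin nV → Fin k,
        (⨆ i, ∑ j ∈ univ.filter (fun j => P j = P i), α j i) = 1) ↔
    (∃ f : Fin nV → Fin k, ∀ i j : Fin nV, i ≠ j → f i = f j → G.Adj i j) := by
  have hnne : Nonempty (Fin nV) := ⟨⟨0, hn⟩⟩
  have hα_nonneg : ∀ i j, 0 ≤ α i j := by
    intro i j
    rw [hα]
    split_ifs <;> linarith
  constructor
  · rintro ⟨P, hP⟩
    refine ⟨P, fun i j hij hfij => ?_⟩
    by_contra hadj
    -- the cost at i is at least 1 + r > 1
    have hle : ∑ m ∈ univ.filter (fun m => P m = P i), α m i ≤ 1 := by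
      rw [← hP]
      exact le_ciSup (f := fun i => ∑ m ∈ univ.filter (fun m => P m = P i), α m i) (Set.Finite.bddAbove (Set.finite_range _)) i
    have hsub : ({i, j} : Finset (Fin nV)) ⊆ univ.filter (fun m => P m = P i) := by
      intro m hm
      simp only [mem_insert, mem_singleton] at hm
      rcases hm with rfl | rfl <;> simp [hfij]
    have hge : ∑ m ∈ ({i, j} : Finset (Fin nV)), α m i ≤
        ∑ m ∈ univ.filter (fun m => P m = P i), α m i :=
      Finset.sum_le_sum_of_subset_of_nonneg hsub (fun m _ _ => hα_nonneg m i)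
    rw [Finset.sum_pair hij] at hge
    have hαii : α i i = 1 := by rw [hα]; simp
    have hαji : α j i = r := by
      rw [hα]
      rw [if_neg (Ne.symm hij), if_neg (fun h => hadj h.symm)]
    rw [hαii, hαji] at hge
    linarith
  · rintro ⟨f, hf⟩
    refine ⟨f, ?_⟩
    have hcost : ∀ i, ∑ j ∈ univ.filter (fun j => f j = f i), α j i = 1 := by
      intro i
      have : ∀ j ∈ univ.filter (fun j => f j = f i), α j i = if j = i then 1 else 0 := by
        intro j hj
        simp only [mem_filter] at hj
        by_cases hji : j = i
        · simp [hji, hα]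
        · rw [hα, if_neg hji, if_pos (hf j i hji hj.2), if_neg hji]
      rw [Finset.sum_congr rfl this, Finset.sum_ite_eq' _ i (fun _ => (1:ℝ))]
      simp
    simp only [hcost]
    exact ciSup_const
end
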